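/- arXiv:1212.0460 — 3 statements merged into one kernel-verified Lean document; each statement's English description precedes it below -/
import Mathlib

section
/- Let Γ ⊂ ℝⁿ be an open convex symmetric cone with vertex at the origin satisfying {λ : all λᵢ > 0} ⊂ Γ ⊂ {λ : λ₁ + ⋯ + λₙ > 0}. Then there exists a unique μ ∈ [0, n−1] such that the vector (−μ, 1, …, 1) lies on the boundary ∂Γ. -/
/-!
The set of `μ` with `(-μ, 1, …, 1) ∈ Γ` is an open down-set of `ℝ`: increasing `μ` by a bit
can be compensated by a small positive vector and a rescaling, since adding a point of `closure Γ`
to a point of the open convex cone `Γ` stays in `Γ`. It contains `(-∞, 0)` because `Γ` contains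
the positive orthant, and it is bounded by `n - 1` because the coordinate sum must stay positive.
Hence it is `(-∞, μ₀)`, and `μ₀` is the only parameter on the boundary.
-/

open Set

theorem Continuous.existsUnique_mem_frontier {X : Type*} [TopologicalSpace X] {f : ℝ → X}
    (hf : Continuous f) {U : Set X} (hU : IsOpen U)
    (hdown : ∀ a b, a < b → f b ∈ closure U → f a ∈ U)
    (hne : (f ⁻¹' U).Nonempty) (hbdd : BddAbove (f ⁻¹' U)) :
    ∃! m, f m ∈ frontier U := by
  set m := sSup (f ⁻¹' U)
  have hlt : ∀ a, a < m → f a ∈ U := fun a ha => by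
    obtain ⟨b, hb, hab⟩ := exists_lt_of_lt_csSup hne ha
    exact hdown a b hab (subset_closure hb)
  have hm : f m ∉ U := fun hm => by
    obtain ⟨b, hmb, hb⟩ := (hf.continuousAt.eventually_mem (hU.mem_nhds hm)).exists_gt
    exact (le_csSup hbdd hb).not_gt hmb
  rw [hU.frontier_eq]
  refine ⟨m, ⟨?_, hm⟩, ?_⟩
  · have hm_cl : m ∈ closure (Iio m) := by simp
    exact hf.closure_preimage_subset U (closure_mono hlt hm_cl)
  · rintro a ⟨ha, ha'⟩
    refine le_antisymm ?_ (not_lt.mp fun h => ha' (hlt a h))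
    exact not_lt.mp fun h => hm (hdown m a h ha)

theorem Convex.add_mem_of_mem_closure_of_mem {E : Type*} [AddCommGroup E] [Module ℝ E]
    [TopologicalSpace E] [IsTopologicalAddGroup E] [ContinuousSMul ℝ E] {Γ : Set E}
    (hopen : IsOpen Γ) (hconv : Convex ℝ Γ) (hcone : ∀ x ∈ Γ, ∀ s : ℝ, 0 < s → s • x ∈ Γ)
    {x y : E} (hx : x ∈ closure Γ) (hy : y ∈ Γ) : x + y ∈ Γ := by
  have hmid : (1 / 2 : ℝ) • y + (1 / 2 : ℝ) • x ∈ Γ := by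
    rw [← hopen.interior_eq] at hy ⊢
    exact hconv.combo_interior_closure_mem_interior hy hx (by norm_num) (by norm_num)
      (by norm_num)
  convert hcone _ hmid 2 two_pos using 1
  module

theorem mem_of_mem_closure_of_lt {ι : Type*} {Γ : Set (ι → ℝ)} (hopen : IsOpen Γ)
    (hconv : Convex ℝ Γ) (hcone : ∀ x ∈ Γ, ∀ s : ℝ, 0 < s → s • x ∈ Γ)
    (horth : {x : ι → ℝ | ∀ i, 0 < x i} ⊆ Γ) {x y : ι → ℝ} (hx : x ∈ closure Γ)
    (hxy : ∀ i, x i < y i) : y ∈ Γ := by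
  have hpos : y - x ∈ Γ := horth fun i => sub_pos.mpr (hxy i)
  simpa using hconv.add_mem_of_mem_closure_of_mem hopen hcone hx hpos

theorem sum_nonneg_of_mem_closure {ι : Type*} [Fintype ι] {Γ : Set (ι → ℝ)}
    (hhalf : Γ ⊆ {x | 0 < ∑ i, x i}) {x : ι → ℝ} (hx : x ∈ closure Γ) : 0 ≤ ∑ i, x i := by
  have hclosed : IsClosed {x : ι → ℝ | 0 ≤ ∑ i, x i} := isClosed_le continuous_const (by fun_prop)
  have hsub : Γ ⊆ {x | 0 ≤ ∑ i, x i} := fun y hy => (show (0 : ℝ) < ∑ i, y i from hhalf hy).le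
  exact closure_minimal hsub hclosed hx

def headNegOnes (n : ℕ) (μ : ℝ) : Fin n → ℝ := fun i => if (i : ℕ) = 0 then -μ else 1

theorem continuous_headNegOnes (n : ℕ) : Continuous (headNegOnes n) :=
  continuous_pi fun i => by unfold headNegOnes; split_ifs <;> fun_prop

theorem sum_headNegOnes (n : ℕ) [NeZero n] (μ : ℝ) :
    ∑ i, headNegOnes n μ i = n - 1 - μ := by
  have hones : ∀ i ∈ Finset.univ.erase 0, headNegOnes n μ i = 1 := fun i hi =>
    if_neg (Fin.val_ne_zero_iff.mpr (Finset.ne_of_mem_erase hi))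
  rw [← Finset.add_sum_erase _ _ (Finset.mem_univ 0), Finset.sum_congr rfl hones]
  simp [headNegOnes, Finset.card_erase_of_mem, Nat.cast_sub NeZero.one_le]
  ring

theorem headNegOnes_pos {n : ℕ} {μ : ℝ} (hμ : μ < 0) (i : Fin n) : 0 < headNegOnes n μ i := by
  unfold headNegOnes
  split_ifs <;> linarith

theorem headNegOnes_mem_of_lt {n : ℕ} {Γ : Set (Fin n → ℝ)} (hopen : IsOpen Γ)
    (hconv : Convex ℝ Γ) (hcone : ∀ x ∈ Γ, ∀ s : ℝ, 0 < s → s • x ∈ Γ)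
    (horth : {x : Fin n → ℝ | ∀ i, 0 < x i} ⊆ Γ) {μ' μ : ℝ} (hlt : μ' < μ)
    (hμ : headNegOnes n μ ∈ closure Γ) : headNegOnes n μ' ∈ Γ := by
  -- `(1 + δ) • (-μ', 1, …, 1)` strictly dominates `(-μ, 1, …, 1)` once `δ * μ' < μ - μ'`
  set δ := (μ - μ') / (|μ'| + 1)
  have hδ : 0 < δ := by positivity [sub_pos.mpr hlt]
  have hδμ' : δ * μ' < μ - μ' := calc
    δ * μ' ≤ δ * |μ'| := mul_le_mul_of_nonneg_left (le_abs_self μ') hδ.le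
    _ < δ * (|μ'| + 1) := by linarith
    _ = μ - μ' := div_mul_cancel₀ _ (by positivity)
  have hscaled : (1 + δ) • headNegOnes n μ' ∈ Γ :=
    mem_of_mem_closure_of_lt hopen hconv hcone horth hμ fun i => by
      simp only [headNegOnes, Pi.smul_apply, smul_eq_mul]
      split_ifs <;> nlinarith
  simpa [smul_smul, inv_mul_cancel₀ (by positivity : (1 + δ) ≠ 0)] using
    hcone _ hscaled (1 + δ)⁻¹ (by positivity)

theorem stmt_0_general (n : ℕ) (hn : 2 ≤ n) (Γ : Set (Fin n → ℝ))
    (hΓopen : IsOpen Γ) (hΓconv : Convex ℝ Γ)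
    (hΓcone : ∀ x ∈ Γ, ∀ s : ℝ, 0 < s → s • x ∈ Γ)
    (hΓorth : {x : Fin n → ℝ | ∀ i, 0 < x i} ⊆ Γ)
    (hΓhalf : Γ ⊆ {x : Fin n → ℝ | 0 < ∑ i, x i}) :
    ∃! μ : ℝ, μ ∈ Set.Icc (0 : ℝ) ((n : ℝ) - 1) ∧
      (fun i : Fin n => if (i : ℕ) = 0 then -μ else 1) ∈ frontier Γ := by
  have : NeZero n := ⟨by omega⟩
  have hneg : ∀ μ < 0, headNegOnes n μ ∈ Γ := fun μ hμ => hΓorth (headNegOnes_pos hμ)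
  have hbdd : ∀ μ, headNegOnes n μ ∈ closure Γ → μ ≤ n - 1 := fun μ hμ => by
    have hsum := sum_nonneg_of_mem_closure hΓhalf hμ
    rw [sum_headNegOnes] at hsum
    linarith
  obtain ⟨μ₀, hμ₀, huniq⟩ := (continuous_headNegOnes n).existsUnique_mem_frontier hΓopen
    (fun _ _ => headNegOnes_mem_of_lt hΓopen hΓconv hΓcone hΓorth) ⟨-1, hneg _ (by norm_num)⟩
    ⟨n - 1, fun μ hμ => hbdd μ (subset_closure hμ)⟩
  refine ⟨μ₀, ⟨⟨?_, hbdd μ₀ (frontier_subset_closure hμ₀)⟩, hμ₀⟩, fun μ hμ => huniq μ hμ.2⟩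
  rw [hΓopen.frontier_eq] at hμ₀
  exact not_lt.mp fun h => hμ₀.2 (hneg μ₀ h)

/-- There exists a unique `μ ∈ [0, n-1]` such that `(-μ, 1, …, 1)` lies on the
boundary of an open convex symmetric cone `Γ` squeezed between the positive
orthant and the half-space `{λ : Σ λᵢ > 0}`. -/
theorem stmt_0 (n : ℕ) (hn : 2 ≤ n) (Γ : Set (Fin n → ℝ))
    (hΓopen : IsOpen Γ) (hΓconv : Convex ℝ Γ)
    (hΓcone : ∀ x ∈ Γ, ∀ s : ℝ, 0 < s → s • x ∈ Γ)
    (hΓsym : ∀ x ∈ Γ, ∀ σ : Equiv.Perm (Fin n), (fun i => x (σ i)) ∈ Γ)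
    (hΓorth : {x : Fin n → ℝ | ∀ i, 0 < x i} ⊆ Γ)
    (hΓhalf : Γ ⊆ {x : Fin n → ℝ | 0 < ∑ i, x i}) :
    ∃! μ : ℝ, μ ∈ Set.Icc (0 : ℝ) ((n : ℝ) - 1) ∧
      (fun i : Fin n => if (i : ℕ) = 0 then -μ else 1) ∈ frontier Γ :=
  stmt_0_general n hn Γ hΓopen hΓconv hΓcone hΓorth hΓhalf
end

section
/- Let u be a positive lower-semicontinuous supersolution of the Laplace equation (Δu ≤ 0 in the viscosity or distributional sense) on a punctured ball B_δ \ {0} ⊂ ℝⁿ, n ≥ 3. Then the function r ↦ r^{n−2} · min_{|x| = r} u(x) converges to a finite limit as r → 0⁺. -/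
/-!
Write `m r` for the infimum of `u` over the sphere of radius `r`. The radial functions
`α + β |x|^(2-n)` are harmonic, and `u` dominates such a function on an annulus as soon as it does
on the two boundary spheres: otherwise, after adding a small `ε |x|²` (whose Laplacian `2nε` is
positive), the minimum of the difference over the annulus is attained at an interior point where the
perturbed function touches `u` from below, contradicting the viscosity inequality. Hence `m` is a
concave function of `t = r^(2-n)` on `(δ^(2-n), ∞)`. A nonnegative concave function has antitone
secant slopes bounded from below, so `m / t = r^(n-2) m(r)` converges as `t → ∞`, i.e. as `r → 0⁺`.
-/

open Filter

/-- Second partial derivative `D_{ij}φ(x)` on `ℝⁿ = EuclideanSpace ℝ (Fin n)`. -/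
noncomputable def D2 {n : ℕ} (φ : EuclideanSpace ℝ (Fin n) → ℝ)
    (x : EuclideanSpace ℝ (Fin n)) (i j : Fin n) : ℝ :=
  fderiv ℝ (fun y => fderiv ℝ φ y (EuclideanSpace.single j 1)) x (EuclideanSpace.single i 1)

open Set Metric Topology

theorem exists_contDiff_le_eventuallyEq {F : Type*} [NormedAddCommGroup F] [NormedSpace ℝ F]
    [HasContDiffBump F] {k : ℕ∞} {s : Set F} {u φ : F → ℝ} {x₀ : F}
    (hu : ∀ x ∈ s, 0 ≤ u x) (hφ : ∀ᶠ x in 𝓝 x₀, ContDiffAt ℝ k φ x ∧ φ x ≤ u x) :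
    ∃ Φ : F → ℝ, ContDiff ℝ k Φ ∧ (∀ x ∈ s, Φ x ≤ u x) ∧ Φ =ᶠ[𝓝 x₀] φ := by
  obtain ⟨R, hR, hball⟩ := nhds_basis_closedBall.mem_iff.1 hφ
  let χ : ContDiffBump x₀ := ⟨R / 2, R, half_pos hR, half_lt_self hR⟩
  have hχ : ∀ x ∉ closedBall x₀ R, χ x = 0 := fun x hx =>
    χ.zero_of_le_dist (le_of_lt (not_le.1 (mt mem_closedBall.2 hx)))
  refine ⟨fun x => χ x * φ x, contDiff_iff_contDiffAt.2 fun x => ?_, fun x hx => ?_, ?_⟩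
  · by_cases hx : x ∈ closedBall x₀ R
    · exact χ.contDiffAt.mul (hball hx).1
    · refine contDiffAt_const (c := (0 : ℝ)).congr_of_eventuallyEq ?_
      filter_upwards [isClosed_closedBall.isOpen_compl.mem_nhds hx] with y hy
      simp [hχ y hy]
  · by_cases hxR : x ∈ closedBall x₀ R
    · rcases le_or_gt (φ x) 0 with hφx | hφx
      · exact (mul_nonpos_of_nonneg_of_nonpos χ.nonneg hφx).trans (hu x hx)
      · exact (mul_le_of_le_one_left hφx.le χ.le_one).trans (hball hxR).2
    · simpa [hχ x hxR] using hu x hx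
  · filter_upwards [χ.eventuallyEq_one] with x hx
    simp [hx]

theorem ConcaveOn.exists_tendsto_div_atTop {f : ℝ → ℝ} {c : ℝ} (hf : ConcaveOn ℝ (Ioi c) f)
    (hf₀ : ∀ t ∈ Ioi c, 0 ≤ f t) : ∃ L, Tendsto (fun t => f t / t) atTop (𝓝 L) := by
  set a := c + 1
  have ha : a ∈ Ioi c := lt_add_one c
  have hmem : ∀ t, max t (a + 1) ∈ Ioi c := fun t => by
    simp only [mem_Ioi, a] at *; linarith [le_max_right t (c + 1 + 1)]
  have hgap : ∀ t, 1 ≤ max t (a + 1) - a := fun t => by linarith [le_max_right t (a + 1)]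
  -- the secant slope from `a`, made constant on `(-∞, a + 1]` so that it is antitone on all of `ℝ`
  set S : ℝ → ℝ := fun t => (f (max t (a + 1)) - f a) / (max t (a + 1) - a)
  have hS : Antitone S := fun s t hst => by
    have hne : ∀ t, max t (a + 1) ≠ a := fun t => by linarith [hgap t]
    have := hf.neg.secant_mono ha (hmem s) (hmem t) (hne s) (hne t) (max_le_max hst le_rfl)
    have hneg : ∀ x, (-f x - -f a) / (x - a) = -((f x - f a) / (x - a)) := fun x => by ring
    simp only [Pi.neg_apply, hneg] at this
    exact neg_le_neg_iff.1 this
  have hSbdd : BddBelow (range S) := ⟨-f a, by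
    rintro _ ⟨t, rfl⟩
    have hpos : 0 < max t (a + 1) - a := by linarith [hgap t]
    rw [le_div_iff₀ hpos]
    nlinarith [hf₀ _ (hmem t), hf₀ a ha, hgap t]⟩
  have hlim : Tendsto (fun t => f a / t + S t * (1 - a / t)) atTop (𝓝 (0 + (⨅ t, S t) * (1 - 0))) :=
    (tendsto_const_nhds.div_atTop tendsto_id).add
      ((tendsto_atTop_ciInf hS hSbdd).mul
        (tendsto_const_nhds.sub (tendsto_const_nhds.div_atTop tendsto_id)))
  rw [zero_add, sub_zero, mul_one] at hlim
  refine ⟨_, hlim.congr' ?_⟩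
  filter_upwards [eventually_ge_atTop (a + 1), eventually_gt_atTop 0] with t ht ht₀
  have hta : t - a ≠ 0 := by linarith
  simp only [S, max_eq_left ht]
  field_simp [ht₀.ne']
  ring

theorem Real.rpow_inv_mem_Ioo_of_neg {p δ t : ℝ} (hp : p < 0) (hδ : 0 < δ) (ht : δ ^ p < t) :
    t ^ p⁻¹ ∈ Ioo 0 δ := by
  have hδp : 0 < δ ^ p := Real.rpow_pos_of_pos hδ p
  refine ⟨Real.rpow_pos_of_pos (hδp.trans ht) _, ?_⟩
  calc t ^ p⁻¹ < (δ ^ p) ^ p⁻¹ := Real.rpow_lt_rpow_of_neg hδp ht (inv_lt_zero.2 hp)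
    _ = δ := Real.rpow_rpow_inv hδ.le hp.ne

variable {n : ℕ}

local notation "E" => EuclideanSpace ℝ (Fin n)

theorem Filter.EventuallyEq.D2_eq {φ ψ : E → ℝ} {x : E} (h : φ =ᶠ[𝓝 x] ψ) (i j : Fin n) :
    D2 φ x i j = D2 ψ x i j := by
  unfold D2
  congr 1
  refine Filter.EventuallyEq.fderiv_eq ?_
  filter_upwards [h.fderiv (𝕜 := ℝ)] with y hy
  rw [hy]

theorem D2_comp_norm_sq {g g' : ℝ → ℝ} {g'' : ℝ} {x₀ : E}
    (hg : ∀ᶠ s in 𝓝 (‖x₀‖ ^ 2), HasDerivAt g (g' s) s) (hg' : HasDerivAt g' g'' (‖x₀‖ ^ 2))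
    (i j : Fin n) :
    D2 (fun x => g (‖x‖ ^ 2)) x₀ i j
      = 4 * g'' * x₀ i * x₀ j + 2 * g' (‖x₀‖ ^ 2) * if i = j then 1 else 0 := by
  have hN : ∀ y : E, HasFDerivAt (fun x : E => ‖x‖ ^ 2) (2 • innerSL ℝ y) y :=
    fun y => (hasStrictFDerivAt_norm_sq y).hasFDerivAt
  have hfderiv : (fun y => fderiv ℝ (fun x : E => g (‖x‖ ^ 2)) y (EuclideanSpace.single j 1))
      =ᶠ[𝓝 x₀] fun y => g' (‖y‖ ^ 2) * (2 * y j) := by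
    filter_upwards [(hN x₀).continuousAt.tendsto.eventually hg] with y hy
    rw [(show HasFDerivAt (fun x : E => g (‖x‖ ^ 2)) _ y from
      hy.comp_hasFDerivAt y (hN y)).fderiv]
    simp [EuclideanSpace.inner_single_right]
  have hsecond : HasFDerivAt (fun y : E => g' (‖y‖ ^ 2) * (2 * y j)) _ x₀ :=
    (hg'.comp_hasFDerivAt x₀ (hN x₀)).mul
      ((EuclideanSpace.proj (𝕜 := ℝ) j).hasFDerivAt.const_mul 2)
  unfold D2
  rw [hfderiv.fderiv_eq, hsecond.fderiv]
  simp only [Function.comp_apply, add_apply, smul_apply,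
    PiLp.proj_apply, PiLp.single_apply, eq_comm, smul_eq_mul, mul_ite, mul_one, mul_zero,
    coe_innerSL_apply, EuclideanSpace.inner_single_right, Real.ringHom_apply, one_mul,
    nsmul_eq_mul, Nat.cast_ofNat]
  split_ifs <;> ring

theorem sum_D2_comp_norm_sq {g g' : ℝ → ℝ} {g'' : ℝ} {x₀ : E}
    (hg : ∀ᶠ s in 𝓝 (‖x₀‖ ^ 2), HasDerivAt g (g' s) s) (hg' : HasDerivAt g' g'' (‖x₀‖ ^ 2)) :
    ∑ i, D2 (fun x => g (‖x‖ ^ 2)) x₀ i i = 4 * ‖x₀‖ ^ 2 * g'' + 2 * n * g' (‖x₀‖ ^ 2) := by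
  have hnorm : ∑ i, x₀ i * x₀ i = ‖x₀‖ ^ 2 := by
    rw [EuclideanSpace.norm_sq_eq]
    simp only [Real.norm_eq_abs, sq, abs_mul_abs_self]
  calc ∑ i, D2 (fun x => g (‖x‖ ^ 2)) x₀ i i
      = ∑ i, (4 * g'' * (x₀ i * x₀ i) + 2 * g' (‖x₀‖ ^ 2)) := by
        simp only [D2_comp_norm_sq hg hg', if_true, mul_one, mul_assoc]
    _ = 4 * ‖x₀‖ ^ 2 * g'' + 2 * n * g' (‖x₀‖ ^ 2) := by
        rw [Finset.sum_add_distrib, ← Finset.mul_sum, hnorm, Finset.sum_const, Finset.card_univ,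
          Fintype.card_fin, nsmul_eq_mul]
        ring

theorem contDiffAt_fundamental_add_norm_sq (c β ε : ℝ) {x₀ : E} (hx₀ : x₀ ≠ 0) :
    ContDiffAt ℝ 2 (fun x : E => c + β * ‖x‖ ^ (2 - n : ℝ) + ε * ‖x‖ ^ 2) x₀ :=
  (contDiffAt_const.add (contDiffAt_const.mul
    ((contDiffAt_norm ℝ hx₀).rpow_const_of_ne (norm_ne_zero_iff.2 hx₀)))).add
    (contDiffAt_const.mul ((contDiffAt_norm ℝ hx₀).pow 2))

theorem sum_D2_fundamental_add_norm_sq (c β ε : ℝ) {x₀ : E} (hx₀ : x₀ ≠ 0) :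
    ∑ i, D2 (fun x : E => c + β * ‖x‖ ^ (2 - n : ℝ) + ε * ‖x‖ ^ 2) x₀ i i = 2 * n * ε := by
  set q : ℝ := (2 - n : ℝ) / 2 with hq
  have hprofile : (fun x : E => c + β * ‖x‖ ^ (2 - n : ℝ) + ε * ‖x‖ ^ 2)
      = fun x => (fun s => c + β * s ^ q + ε * s) (‖x‖ ^ 2) := by
    funext x
    change _ = c + β * (‖x‖ ^ 2) ^ q + ε * ‖x‖ ^ 2
    rw [← Real.rpow_natCast, ← Real.rpow_mul (norm_nonneg x), Nat.cast_ofNat,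
      show (2 : ℝ) * q = 2 - n by rw [hq]; ring]
  have hs : 0 < ‖x₀‖ ^ 2 := by positivity
  rw [hprofile, sum_D2_comp_norm_sq (g := fun s => c + β * s ^ q + ε * s)
    (g' := fun s => β * (q * s ^ (q - 1)) + ε) (g'' := β * (q * ((q - 1) * (‖x₀‖ ^ 2) ^ (q - 1 - 1))))]
  · have hpow : ‖x₀‖ ^ 2 * (‖x₀‖ ^ 2) ^ (q - 1 - 1) = (‖x₀‖ ^ 2) ^ (q - 1) := by
      rw [Real.rpow_sub_one hs.ne', mul_div_cancel₀ _ hs.ne']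
    linear_combination (4 * β * q * (q - 1)) * hpow + (2 * β * q * (‖x₀‖ ^ 2) ^ (q - 1)) * hq
  · filter_upwards [Ioi_mem_nhds hs] with s hs
    simpa using
      (((Real.hasDerivAt_rpow_const (p := q) (Or.inl hs.ne')).const_mul β).const_add c).fun_add
        ((hasDerivAt_id s).const_mul ε)
  · exact (((Real.hasDerivAt_rpow_const (p := q - 1) (Or.inl hs.ne')).const_mul q).const_mul
      β).add_const ε

noncomputable def sphereInf (u : E → ℝ) (r : ℝ) : ℝ :=
  sInf (u '' sphere (0 : E) r)

theorem sphereInf_le {u : E → ℝ} {r : ℝ} (hu : ∀ x ∈ sphere (0 : E) r, 0 ≤ u x) {x : E}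
    (hx : ‖x‖ = r) : sphereInf u r ≤ u x :=
  csInf_le ⟨0, by rintro _ ⟨y, hy, rfl⟩; exact hu y hy⟩
    (mem_image_of_mem u (mem_sphere_zero_iff_norm.2 hx))

theorem le_sphereInf [NeZero n] {u : E → ℝ} {r c : ℝ} (hr : 0 ≤ r)
    (h : ∀ x : E, ‖x‖ = r → c ≤ u x) : c ≤ sphereInf u r :=
  le_csInf ((NormedSpace.sphere_nonempty.2 hr).image u) <| by
    rintro _ ⟨y, hy, rfl⟩
    exact h y (mem_sphere_zero_iff_norm.1 hy)

theorem sphereInf_nonneg [NeZero n] {δ : ℝ} {u : E → ℝ}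
    (hu₀ : ∀ x ∈ {x : E | 0 < ‖x‖ ∧ ‖x‖ < δ}, 0 ≤ u x)
    {r : ℝ} (hr : r ∈ Ioo 0 δ) : 0 ≤ sphereInf u r :=
  le_sphereInf hr.1.le fun x hx => hu₀ x ⟨hx ▸ hr.1, hx ▸ hr.2⟩

def IsViscositySuperharmonic (Ω : Set E) (u : E → ℝ) : Prop :=
  ∀ x₀ ∈ Ω, ∀ φ : E → ℝ, ContDiff ℝ 2 φ → (∀ x ∈ Ω, φ x ≤ u x) → φ x₀ = u x₀ →
    ∑ i, D2 φ x₀ i i ≤ 0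

namespace IsViscositySuperharmonic

variable {Ω : Set (EuclideanSpace ℝ (Fin n))} {u : EuclideanSpace ℝ (Fin n) → ℝ} {δ : ℝ}

theorem sum_D2_nonpos_of_eventually_le (hu : IsViscositySuperharmonic Ω u)
    (hu₀ : ∀ x ∈ Ω, 0 ≤ u x) {φ : E → ℝ} {x₀ : E} (hx₀ : x₀ ∈ Ω)
    (hφ : ∀ᶠ x in 𝓝 x₀, ContDiffAt ℝ 2 φ x ∧ φ x ≤ u x) (heq : φ x₀ = u x₀) :
    ∑ i, D2 φ x₀ i i ≤ 0 := by
  obtain ⟨Φ, hΦ, hΦu, hΦφ⟩ := exists_contDiff_le_eventuallyEq hu₀ hφ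
  calc ∑ i, D2 φ x₀ i i = ∑ i, D2 Φ x₀ i i :=
        Finset.sum_congr rfl fun i _ => (hΦφ.D2_eq i i).symm
    _ ≤ 0 := hu x₀ hx₀ Φ hΦ hΦu (hΦφ.eq_of_nhds.trans heq)

theorem fundamental_le_of_le_on_boundary (hu : IsViscositySuperharmonic Ω u)
    (hu₀ : ∀ x ∈ Ω, 0 ≤ u x) {r₁ r₂ α β : ℝ} (hr₁ : 0 < r₁)
    (hA : {x : E | r₁ ≤ ‖x‖ ∧ ‖x‖ ≤ r₂} ⊆ Ω)
    (hlsc : LowerSemicontinuousOn u {x : E | r₁ ≤ ‖x‖ ∧ ‖x‖ ≤ r₂})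
    (hbdry : ∀ x : E, ‖x‖ = r₁ ∨ ‖x‖ = r₂ → α + β * ‖x‖ ^ (2 - n : ℝ) ≤ u x)
    {x : E} (hx₁ : r₁ ≤ ‖x‖) (hx₂ : ‖x‖ ≤ r₂) : α + β * ‖x‖ ^ (2 - n : ℝ) ≤ u x := by
  set A := {x : E | r₁ ≤ ‖x‖ ∧ ‖x‖ ≤ r₂}
  by_contra! hlt
  have hA₀ : ∀ y ∈ A, y ≠ 0 := fun y hy h => by
    have := hy.1
    rw [h, norm_zero] at this
    linarith
  have hn : 0 < n := Nat.pos_of_ne_zero fun hn => by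
    subst hn
    exact hA₀ x ⟨hx₁, hx₂⟩ (Subsingleton.elim x 0)
  have hr₂ : 0 < r₂ := hr₁.trans_le (hx₁.trans hx₂)
  set d := α + β * ‖x‖ ^ (2 - n : ℝ) - u x
  have hd : 0 < d := sub_pos.2 hlt
  set ε := d / (2 * r₂ ^ 2)
  have hε : 0 < ε := by positivity
  have hεr₂ : ε * r₂ ^ 2 = d / 2 := by simp only [ε]; field_simp
  set φ : E → ℝ := fun y => α + β * ‖y‖ ^ (2 - n : ℝ) + ε * ‖y‖ ^ 2
  have hAcpt : IsCompact A :=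
    (isCompact_closedBall (0 : E) r₂).of_isClosed_subset
      ((isClosed_le continuous_const continuous_norm).inter
        (isClosed_le continuous_norm continuous_const))
      fun y hy => mem_closedBall_zero_iff.2 hy.2
  have hφcont : ContinuousOn (fun y => -φ y) A := fun y hy =>
    (contDiffAt_fundamental_add_norm_sq α β ε (hA₀ y hy)).continuousAt.neg.continuousWithinAt
  obtain ⟨x₀, hx₀A, hmin⟩ :=
    (hlsc.add hφcont.lowerSemicontinuousOn).exists_isMinOn (⟨x, hx₁, hx₂⟩ : A.Nonempty) hAcpt
  have hmin' : ∀ y ∈ A, u x₀ - φ x₀ ≤ u y - φ y := fun y hy => by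
    simpa [sub_eq_add_neg] using isMinOn_iff.1 hmin y hy
  have hμ : u x₀ - φ x₀ ≤ -d := by
    have := hmin' x ⟨hx₁, hx₂⟩
    have : 0 ≤ ε * ‖x‖ ^ 2 := by positivity
    simp only [φ, d] at *
    linarith
  have hx₀int : r₁ < ‖x₀‖ ∧ ‖x₀‖ < r₂ := by
    have hbd : ‖x₀‖ = r₁ ∨ ‖x₀‖ = r₂ → -(d / 2) ≤ u x₀ - φ x₀ := fun h => by
      have h1 := hbdry x₀ h
      have h2 : ε * ‖x₀‖ ^ 2 ≤ ε * r₂ ^ 2 := by gcongr; exact hx₀A.2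
      simp only [φ]
      linarith
    refine ⟨lt_of_le_of_ne hx₀A.1 fun h => ?_, lt_of_le_of_ne hx₀A.2 fun h => ?_⟩
    · linarith [hbd (Or.inl h.symm)]
    · linarith [hbd (Or.inr h)]
  have hlap := hu.sum_D2_nonpos_of_eventually_le hu₀ (hA hx₀A)
    (φ := fun y => (α + (u x₀ - φ x₀)) + β * ‖y‖ ^ (2 - n : ℝ) + ε * ‖y‖ ^ 2) ?_ (by ring)
  · rw [sum_D2_fundamental_add_norm_sq _ _ _ (hA₀ x₀ hx₀A)] at hlap
    have : (0 : ℝ) < n := Nat.cast_pos.2 hn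
    nlinarith
  · have hopen : IsOpen {y : E | r₁ < ‖y‖ ∧ ‖y‖ < r₂} :=
      (isOpen_lt continuous_const continuous_norm).inter
        (isOpen_lt continuous_norm continuous_const)
    filter_upwards [hopen.mem_nhds hx₀int] with y hy
    have hyA : y ∈ A := ⟨hy.1.le, hy.2.le⟩
    refine ⟨contDiffAt_fundamental_add_norm_sq _ _ _ (hA₀ y hyA), ?_⟩
    have := hmin' y hyA
    simp only [φ] at this ⊢
    linarith

theorem fundamental_le_sphereInf [NeZero n]
    (hu : IsViscositySuperharmonic {x : E | 0 < ‖x‖ ∧ ‖x‖ < δ} u)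
    (hu₀ : ∀ x ∈ {x : E | 0 < ‖x‖ ∧ ‖x‖ < δ}, 0 ≤ u x)
    (hlsc : LowerSemicontinuousOn u {x : E | 0 < ‖x‖ ∧ ‖x‖ < δ})
    {r₁ r r₂ α β : ℝ} (hr₁ : 0 < r₁) (hr₁r : r₁ ≤ r) (hrr₂ : r ≤ r₂) (hr₂ : r₂ < δ)
    (h₁ : α + β * r₁ ^ (2 - n : ℝ) ≤ sphereInf u r₁)
    (h₂ : α + β * r₂ ^ (2 - n : ℝ) ≤ sphereInf u r₂) :
    α + β * r ^ (2 - n : ℝ) ≤ sphereInf u r := by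
  have hA : {x : E | r₁ ≤ ‖x‖ ∧ ‖x‖ ≤ r₂} ⊆ {x : E | 0 < ‖x‖ ∧ ‖x‖ < δ} :=
    fun x hx => ⟨hr₁.trans_le hx.1, hx.2.trans_lt hr₂⟩
  have hsphere : ∀ s, r₁ ≤ s → s ≤ r₂ → ∀ x ∈ sphere (0 : E) s, 0 ≤ u x := fun s h₁ h₂ x hx => by
    rw [mem_sphere_zero_iff_norm] at hx
    exact hu₀ x (hA ⟨hx ▸ h₁, hx ▸ h₂⟩)
  refine le_sphereInf (hr₁.le.trans hr₁r) fun x hx => ?_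
  rw [← hx]
  refine hu.fundamental_le_of_le_on_boundary hu₀ hr₁ hA (hlsc.mono hA) (fun y hy => ?_)
    (hx ▸ hr₁r) (hx ▸ hrr₂)
  rcases hy with hy | hy <;> rw [hy]
  · exact h₁.trans (sphereInf_le (hsphere r₁ le_rfl (hr₁r.trans hrr₂)) hy)
  · exact h₂.trans (sphereInf_le (hsphere r₂ (hr₁r.trans hrr₂) le_rfl) hy)

theorem concaveOn_sphereInf (hn : 2 < n) (hδ : 0 < δ)
    (hu : IsViscositySuperharmonic {x : E | 0 < ‖x‖ ∧ ‖x‖ < δ} u)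
    (hu₀ : ∀ x ∈ {x : E | 0 < ‖x‖ ∧ ‖x‖ < δ}, 0 ≤ u x)
    (hlsc : LowerSemicontinuousOn u {x : E | 0 < ‖x‖ ∧ ‖x‖ < δ}) :
    ConcaveOn ℝ (Ioi (δ ^ (2 - n : ℝ))) fun t => sphereInf u (t ^ (2 - n : ℝ)⁻¹) := by
  have : NeZero n := ⟨by omega⟩
  set p : ℝ := 2 - n
  have hp : p < 0 := by
    have : (2 : ℝ) < n := by exact_mod_cast hn
    simp only [p]; linarith
  have hρ : ∀ t ∈ Ioi (δ ^ p), t ^ p⁻¹ ∈ Ioo 0 δ := fun t ht =>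
    Real.rpow_inv_mem_Ioo_of_neg hp hδ ht
  have hρanti : ∀ {s t}, s ∈ Ioi (δ ^ p) → s ≤ t → t ^ p⁻¹ ≤ s ^ p⁻¹ := fun hs hst =>
    Real.rpow_le_rpow_of_nonpos ((Real.rpow_pos_of_pos hδ p).trans hs) hst (inv_nonpos.2 hp.le)
  have hρp : ∀ t ∈ Ioi (δ ^ p), (t ^ p⁻¹) ^ p = t := fun t ht =>
    Real.rpow_inv_rpow ((Real.rpow_pos_of_pos hδ p).trans ht).le hp.ne
  refine concaveOn_of_slope_anti_adjacent (convex_Ioi _) fun {x y z} hx hz hxy hyz => ?_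
  set M := fun t => sphereInf u (t ^ p⁻¹)
  have hy : y ∈ Ioi (δ ^ p) := mem_Ioi.2 (hx.out.trans hxy)
  obtain ⟨β, hβ⟩ : ∃ β, β * (z - x) = M z - M x :=
    ⟨_, div_mul_cancel₀ _ (sub_pos.2 (hxy.trans hyz)).ne'⟩
  have key : M x - β * x + β * y ≤ M y := by
    have := hu.fundamental_le_sphereInf hu₀ hlsc (α := M x - β * x) (β := β) (hρ z hz).1
      (hρanti hy hyz.le) (hρanti hx hxy.le) (hρ x hx).2
      (by rw [hρp z hz]; linarith) (by rw [hρp x hx]; linarith)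
    rwa [hρp y hy] at this
  have key' := mul_le_mul_of_nonneg_left key (sub_pos.2 (hxy.trans hyz)).le
  rw [div_le_div_iff₀ (sub_pos.2 hyz) (sub_pos.2 hxy)]
  linear_combination key' - (y - x) * hβ

end IsViscositySuperharmonic

/-- If `u > 0` is a lower semicontinuous viscosity supersolution of the Laplace
equation (`Δu ≤ 0`) on a punctured ball `B_δ \ {0} ⊂ ℝⁿ`, `n ≥ 3`, then
`r ↦ r^{n-2} min_{|x| = r} u` converges to a finite limit as `r → 0⁺`. -/
theorem stmt_11 (n : ℕ) (hn : 3 ≤ n) (δ : ℝ) (hδ : 0 < δ)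
    (u : EuclideanSpace ℝ (Fin n) → ℝ)
    (hpos : ∀ x, 0 < ‖x‖ → ‖x‖ < δ → 0 < u x)
    (hlsc : LowerSemicontinuousOn u {x | 0 < ‖x‖ ∧ ‖x‖ < δ})
    (hsuper : ∀ x₀, 0 < ‖x₀‖ → ‖x₀‖ < δ →
      ∀ φ : EuclideanSpace ℝ (Fin n) → ℝ, ContDiff ℝ 2 φ →
        (∀ x, 0 < ‖x‖ → ‖x‖ < δ → φ x ≤ u x) → φ x₀ = u x₀ →
        (∑ i, D2 φ x₀ i i) ≤ 0) :
    ∃ l : ℝ, Tendsto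
      (fun r : ℝ => r ^ ((n : ℝ) - 2) * sInf (u '' Metric.sphere (0 : EuclideanSpace ℝ (Fin n)) r))
      (nhdsWithin 0 (Set.Ioi 0)) (nhds l) := by
  have : NeZero n := ⟨by omega⟩
  have hu : IsViscositySuperharmonic {x | 0 < ‖x‖ ∧ ‖x‖ < δ} u :=
    fun x₀ hx₀ φ hφ hle heq => hsuper x₀ hx₀.1 hx₀.2 φ hφ (fun x h₁ h₂ => hle x ⟨h₁, h₂⟩) heq
  have hu₀ : ∀ x ∈ {x | 0 < ‖x‖ ∧ ‖x‖ < δ}, 0 ≤ u x := fun x hx => (hpos x hx.1 hx.2).le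
  have hp : (2 - n : ℝ) < 0 := by
    have : (3 : ℝ) ≤ n := by exact_mod_cast hn
    linarith
  obtain ⟨L, hL⟩ := (hu.concaveOn_sphereInf (by omega) hδ hu₀ hlsc).exists_tendsto_div_atTop
    fun t ht => sphereInf_nonneg hu₀ (Real.rpow_inv_mem_Ioo_of_neg hp hδ ht)
  refine ⟨L, (hL.comp (tendsto_rpow_neg_nhdsGT_zero hp)).congr' ?_⟩
  filter_upwards [self_mem_nhdsWithin] with r (hr : 0 < r)
  rw [Function.comp_apply, Real.rpow_rpow_inv hr.le hp.ne, show (n : ℝ) - 2 = -(2 - n) by ring,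
    Real.rpow_neg hr.le, div_eq_inv_mul]
  rfl
end

section
/- Fix n ≥ 3, 1 < μ < 2 and 0 < δ < 1, and let r₁ > 0 be sufficiently small. For 0 < ε < 1 define v_ε(r) = (ε r^{−μ+1} + 1 − r^{δ})^{(n−2)/(μ−1)} on 0 < r < r₁, and set χ₁ = −(2/(n−2)) v_ε^{-1} v_ε'/r − (2/(n−2)²) v_ε^{-2} (v_ε')², χ₂ = (2/(n−2)) v_ε^{-1}(v_ε'' − v_ε'/r) − (2n/(n−2)²) v_ε^{-2}(v_ε')². Then χ₁ > 0 on (0, r₁), and moreover χ₂ − (μ+1)χ₁ = −2δ(μ−1+δ) / ((μ−1) r^{2−δ} (ε r^{−μ+1} + 1 − r^{δ})) < 0. -/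
/-!
Write `v = w ^ p` with `w = ε r^{1-μ} + 1 - r^δ` and `p = (n-2)/(μ-1)`. Since `v'/v = p w'/w`, the
exponent `p` cancels against the prefactors `2/(n-2)` and

  `χ₁ = -2 w' ((μ-1) w + r w') / ((μ-1)² r w²)`,  `χ₂ - (μ+1) χ₁ = 2 (r w'' + μ w') / ((μ-1) r w)`.

The Euler-type operators `(μ-1) + r d/dr` and `r d²/dr² + μ d/dr` annihilate the singular term
`ε r^{1-μ}`, so both brackets are independent of `ε`:
`(μ-1) w + r w' = (μ-1) - (μ-1+δ) r^δ` and `r w'' + μ w' = -δ(μ-1+δ) r^{δ-1}`.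
Hence `χ₁ > 0` as soon as `(μ-1+δ) r^δ < μ-1`, which fixes `r₁`.
-/

open Filter Topology

theorem hasDerivAt_rpow_const_div {c s : ℝ} (hs : s ≠ 0) :
    HasDerivAt (fun t : ℝ => t ^ c) (c * s ^ c / s) s := by
  simpa [Real.rpow_sub_one hs, mul_div_assoc] using Real.hasDerivAt_rpow_const (p := c) (Or.inl hs)

theorem HasDerivAt.rpow_const_logDeriv {w : ℝ → ℝ} {w' x p : ℝ} (hw : HasDerivAt w w' x)
    (hx : w x ≠ 0) : HasDerivAt (fun y => w y ^ p) (p * w x ^ p * (w' / w x)) x := by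
  convert hw.rpow_const (p := p) (Or.inl hx) using 1
  rw [Real.rpow_sub_one hx]
  ring

theorem hasDerivAt_deriv_rpow {w w' : ℝ → ℝ} {w'' p r : ℝ}
    (hw : ∀ᶠ s in 𝓝 r, HasDerivAt w (w' s) s) (hw' : HasDerivAt w' w'' r) (hr : w r ≠ 0) :
    HasDerivAt (deriv fun s => w s ^ p)
      (p * w r ^ p * ((p - 1) * (w' r / w r) ^ 2 + w'' / w r)) r := by
  have hwr := hw.self_of_nhds
  have hderiv : deriv (fun s => w s ^ p) =ᶠ[𝓝 r] fun s => p * w s ^ p * (w' s / w s) := by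
    filter_upwards [hw, hwr.continuousAt.eventually_ne hr] with s hs hs0
    exact (hs.rpow_const_logDeriv hs0).deriv
  have := ((hwr.rpow_const_logDeriv (p := p) hr).const_mul p).mul (hw'.div hwr hr)
  refine (this.congr_deriv ?_).congr_of_eventuallyEq hderiv
  simp only [Pi.div_apply]
  field_simp
  ring

section SchoutenCoefficients

variable {n μ V W W₁ W₂ r : ℝ}

/-- `χ₁` of the conformal metric `V^{4/(n-2)} |dx|²` at radius `r`, where `V₁ = V'(r)`. -/
noncomputable def schoutenCoeff₁ (n V V₁ r : ℝ) : ℝ :=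
  -(2 / (n - 2)) * V⁻¹ * V₁ / r - (2 / (n - 2) ^ 2) * (V ^ 2)⁻¹ * V₁ ^ 2

/-- `χ₂` of the conformal metric `V^{4/(n-2)} |dx|²` at radius `r`, where `V₁ = V'(r)` and
`V₂ = V''(r)`. -/
noncomputable def schoutenCoeff₂ (n V V₁ V₂ r : ℝ) : ℝ :=
  (2 / (n - 2)) * V⁻¹ * (V₂ - V₁ / r) - (2 * n / (n - 2) ^ 2) * (V ^ 2)⁻¹ * V₁ ^ 2

theorem schoutenCoeff₁_rpow (hn : n - 2 ≠ 0) (hμ : μ - 1 ≠ 0) (hV : V ≠ 0) (hW : W ≠ 0)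
    (hr : r ≠ 0) :
    schoutenCoeff₁ n V ((n - 2) / (μ - 1) * V * (W₁ / W)) r =
      -2 * W₁ * ((μ - 1) * W + r * W₁) / ((μ - 1) ^ 2 * r * W ^ 2) := by
  unfold schoutenCoeff₁
  field_simp
  ring

theorem schoutenCoeff₂_sub_schoutenCoeff₁_rpow (hn : n - 2 ≠ 0) (hμ : μ - 1 ≠ 0) (hV : V ≠ 0)
    (hW : W ≠ 0) (hr : r ≠ 0) :
    schoutenCoeff₂ n V ((n - 2) / (μ - 1) * V * (W₁ / W))
        ((n - 2) / (μ - 1) * V * (((n - 2) / (μ - 1) - 1) * (W₁ / W) ^ 2 + W₂ / W)) r -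
      (μ + 1) * schoutenCoeff₁ n V ((n - 2) / (μ - 1) * V * (W₁ / W)) r =
      2 * (r * W₂ + μ * W₁) / ((μ - 1) * r * W) := by
  unfold schoutenCoeff₁ schoutenCoeff₂
  field_simp
  ring

end SchoutenCoefficients

section RadialProfile

/-- The base `ε s^{1-μ} + 1 - s^δ` of `v_ε = (ε s^{1-μ} + 1 - s^δ)^{(n-2)/(μ-1)}`. -/
noncomputable def radialProfile (ε μ δ s : ℝ) : ℝ := ε * s ^ (-μ + 1) + 1 - s ^ δ

noncomputable def radialProfileDeriv (ε μ δ s : ℝ) : ℝ :=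
  ((1 - μ) * ε * s ^ (-μ + 1) - δ * s ^ δ) / s

noncomputable def radialProfileDeriv2 (ε μ δ s : ℝ) : ℝ :=
  ((1 - μ) * (-μ) * ε * s ^ (-μ + 1) - δ * (δ - 1) * s ^ δ) / s ^ 2

variable {ε μ δ s : ℝ}

theorem hasDerivAt_radialProfile (hs : s ≠ 0) :
    HasDerivAt (radialProfile ε μ δ) (radialProfileDeriv ε μ δ s) s := by
  have := (((hasDerivAt_rpow_const_div (c := -μ + 1) hs).const_mul ε).add_const 1).sub
    (hasDerivAt_rpow_const_div (c := δ) hs)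
  exact this.congr_deriv (by unfold radialProfileDeriv; ring)

theorem hasDerivAt_radialProfileDeriv (hs : s ≠ 0) :
    HasDerivAt (radialProfileDeriv ε μ δ) (radialProfileDeriv2 ε μ δ s) s := by
  have := ((((hasDerivAt_rpow_const_div (c := -μ + 1) hs).const_mul ((1 - μ) * ε)).sub
    ((hasDerivAt_rpow_const_div (c := δ) hs).const_mul δ)).div (hasDerivAt_id' s) hs)
  refine this.congr_deriv ?_
  simp only [Pi.sub_apply]
  unfold radialProfileDeriv2
  field_simp
  ring

theorem sub_one_mul_radialProfile_add (hs : s ≠ 0) :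
    (μ - 1) * radialProfile ε μ δ s + s * radialProfileDeriv ε μ δ s =
      μ - 1 - (μ - 1 + δ) * s ^ δ := by
  unfold radialProfile radialProfileDeriv
  field_simp
  ring

theorem mul_radialProfileDeriv2_add (hs : s ≠ 0) :
    s * radialProfileDeriv2 ε μ δ s + μ * radialProfileDeriv ε μ δ s =
      -(δ * (μ - 1 + δ)) * s ^ δ / s := by
  unfold radialProfileDeriv radialProfileDeriv2
  field_simp
  ring

theorem radialProfile_pos (hε : 0 < ε) (hs : 0 < s) (hsδ : s ^ δ < 1) :
    0 < radialProfile ε μ δ s := by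
  have : 0 < ε * s ^ (-μ + 1) := by positivity
  unfold radialProfile
  linarith

theorem radialProfileDeriv_neg (hε : 0 < ε) (hμ : 1 < μ) (hδ : 0 < δ) (hs : 0 < s) :
    radialProfileDeriv ε μ δ s < 0 := by
  have h₁ : 0 < (μ - 1) * ε * s ^ (-μ + 1) := by
    have : 0 < μ - 1 := by linarith
    positivity
  have h₂ : 0 < δ * s ^ δ := by positivity
  exact div_neg_of_neg_of_pos (by linarith) hs

end RadialProfile

theorem stmt_15_general (n : ℕ) (hn : 3 ≤ n) (μ δ : ℝ)
    (hμ1 : 1 < μ) (hδ0 : 0 < δ) :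
    ∃ r₁ : ℝ, 0 < r₁ ∧
      ∀ ε ∈ Set.Ioo (0 : ℝ) 1, ∀ r ∈ Set.Ioo (0 : ℝ) r₁,
        let v : ℝ → ℝ := fun s => (ε * s ^ (-μ + 1) + 1 - s ^ δ) ^ (((n : ℝ) - 2) / (μ - 1))
        let χ₁ : ℝ := -(2 / ((n : ℝ) - 2)) * (v r)⁻¹ * deriv v r / r -
          (2 / ((n : ℝ) - 2) ^ 2) * ((v r) ^ 2)⁻¹ * (deriv v r) ^ 2
        let χ₂ : ℝ := (2 / ((n : ℝ) - 2)) * (v r)⁻¹ * (deriv (deriv v) r - deriv v r / r) -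
          (2 * (n : ℝ) / ((n : ℝ) - 2) ^ 2) * ((v r) ^ 2)⁻¹ * (deriv v r) ^ 2
        0 < χ₁ ∧
        χ₂ - (μ + 1) * χ₁ =
          -(2 * δ * (μ - 1 + δ)) / ((μ - 1) * r ^ (2 - δ) * (ε * r ^ (-μ + 1) + 1 - r ^ δ)) ∧
        χ₂ - (μ + 1) * χ₁ < 0 := by
  have hμ : 0 < μ - 1 := by linarith
  have hn2 : (n : ℝ) - 2 ≠ 0 := by
    have : (3 : ℝ) ≤ n := by exact_mod_cast hn
    linarith
  refine ⟨((μ - 1) / (μ - 1 + δ)) ^ δ⁻¹, by positivity, fun ε hε r ⟨hr, hr₁⟩ => ?_⟩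
  intro v χ₁ χ₂
  rw [Real.lt_rpow_inv_iff_of_pos hr.le (by positivity) hδ0, lt_div_iff₀ (by linarith)] at hr₁
  have hw : 0 < radialProfile ε μ δ r := radialProfile_pos hε.1 hr (by nlinarith)
  have hderiv : ∀ᶠ s in 𝓝 r, HasDerivAt (radialProfile ε μ δ) (radialProfileDeriv ε μ δ s) s :=
    (lt_mem_nhds hr).mono fun s hs => hasDerivAt_radialProfile hs.ne'
  have hv : v r = radialProfile ε μ δ r ^ (((n : ℝ) - 2) / (μ - 1)) := rfl
  have hv₁ : deriv v r = _ := (hderiv.self_of_nhds.rpow_const_logDeriv hw.ne').deriv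
  have hv₂ : deriv (deriv v) r = _ :=
    (hasDerivAt_deriv_rpow hderiv (hasDerivAt_radialProfileDeriv hr.ne') hw.ne').deriv
  have hχ₁ : 0 < χ₁ := by
    change 0 < schoutenCoeff₁ n (v r) _ r
    rw [hv₁, hv, schoutenCoeff₁_rpow hn2 hμ.ne' (by positivity) hw.ne' hr.ne',
      sub_one_mul_radialProfile_add hr.ne']
    have := radialProfileDeriv_neg hε.1 hμ1 hδ0 hr
    exact div_pos (by nlinarith) (by positivity)
  have hχ : χ₂ - (μ + 1) * χ₁ = -(2 * δ * (μ - 1 + δ)) /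
      ((μ - 1) * r ^ (2 - δ) * (ε * r ^ (-μ + 1) + 1 - r ^ δ)) := by
    change schoutenCoeff₂ n (v r) _ _ r - (μ + 1) * schoutenCoeff₁ n (v r) _ r = _
    rw [hv₁, hv₂, hv, schoutenCoeff₂_sub_schoutenCoeff₁_rpow hn2 hμ.ne' (by positivity) hw.ne'
      hr.ne', mul_radialProfileDeriv2_add hr.ne', Real.rpow_sub hr, Real.rpow_two]
    unfold radialProfile at hw ⊢
    field_simp
  exact ⟨hχ₁, hχ, hχ ▸ div_neg_of_neg_of_pos (by nlinarith) (by positivity)⟩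

/-- Radial Schouten coefficients of the supersolution
`v_ε(r) = (ε r^{-μ+1} + 1 - r^δ)^{(n-2)/(μ-1)}` (Lemma A.2 computation):
for `1 < μ < 2`, `0 < δ < 1` there is `r₁ > 0` such that for all
`ε ∈ (0,1)` and `r ∈ (0,r₁)` one has `χ₁ > 0` and
`χ₂ - (μ+1)χ₁ = -2δ(μ-1+δ)/((μ-1) r^{2-δ} (ε r^{-μ+1} + 1 - r^δ)) < 0`. -/
theorem stmt_15 (n : ℕ) (hn : 3 ≤ n) (μ δ : ℝ)
    (hμ1 : 1 < μ) (hμ2 : μ < 2) (hδ0 : 0 < δ) (hδ1 : δ < 1) :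
    ∃ r₁ : ℝ, 0 < r₁ ∧
      ∀ ε ∈ Set.Ioo (0 : ℝ) 1, ∀ r ∈ Set.Ioo (0 : ℝ) r₁,
        let v : ℝ → ℝ := fun s => (ε * s ^ (-μ + 1) + 1 - s ^ δ) ^ (((n : ℝ) - 2) / (μ - 1))
        let χ₁ : ℝ := -(2 / ((n : ℝ) - 2)) * (v r)⁻¹ * deriv v r / r -
          (2 / ((n : ℝ) - 2) ^ 2) * ((v r) ^ 2)⁻¹ * (deriv v r) ^ 2
        let χ₂ : ℝ := (2 / ((n : ℝ) - 2)) * (v r)⁻¹ * (deriv (deriv v) r - deriv v r / r) -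
          (2 * (n : ℝ) / ((n : ℝ) - 2) ^ 2) * ((v r) ^ 2)⁻¹ * (deriv v r) ^ 2
        0 < χ₁ ∧
        χ₂ - (μ + 1) * χ₁ =
          -(2 * δ * (μ - 1 + δ)) / ((μ - 1) * r ^ (2 - δ) * (ε * r ^ (-μ + 1) + 1 - r ^ δ)) ∧
        χ₂ - (μ + 1) * χ₁ < 0 :=
  stmt_15_general n hn μ δ hμ1 hδ0
end
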